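/- arXiv:2103.17216 — 4 statements merged into one kernel-verified Lean document; each statement's English description precedes it below -/
import Mathlib

section
/- Let π be a set of primes, let G and H be finite groups with H a π-group, and let f : G → H be a surjective group homomorphism. Then there exists a π-subgroup M of G with f(M) = H. -/
/-!
Take `M ≤ G` minimal with `f(M) = H`. No proper subgroup of `M` supplements `K = ker (f|_M)`,
and for such a normal subgroup every prime `p` dividing `|M|` divides `[M : K] = |H|`:
otherwise a Sylow `p`-subgroup `P` lies in `K`, the Frattini argument `N_M(P) K = M` forces
`P ⊴ M`, and a Schur–Zassenhaus complement of `P` would be a proper supplement of `K`.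
-/

/-- A subgroup `H` of `G` is intravariant if every automorphism of `G` maps `H`
to a conjugate of `H`. -/
def IsIntravariant {G : Type*} [Group G] (H : Subgroup G) : Prop :=
  ∀ a : MulAut G, ∃ g : G,
    H.map a.toMonoidHom = H.map (MulAut.conj g).toMonoidHom

/-- A group is a `π`-group if every prime dividing its order lies in `π`. -/
def IsPiGroup (π : Set ℕ) (H : Type*) [Group H] : Prop :=
  ∀ p : ℕ, p.Prime → p ∣ Nat.card H → p ∈ π

theorem IsPGroup.le_ker_of_not_dvd_card {G K : Type*} [Group G] [Group K] {p : ℕ}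
    [Fact p.Prime] {P : Subgroup G} (hP : IsPGroup p P) (f : G →* K)
    (hpK : ¬p ∣ Nat.card K) : P ≤ f.ker := by
  rw [← Subgroup.map_eq_bot_iff, ← Subgroup.card_eq_one]
  exact (hP.map f).card_eq_or_dvd.resolve_right
    fun hp => hpK (hp.trans (Subgroup.card_subgroup_dvd_card _))

theorem Subgroup.prime_dvd_index_of_forall_sup_eq_top {G : Type*} [Group G] [Finite G]
    {N : Subgroup G} [N.Normal] (hN : ∀ K : Subgroup G, K ⊔ N = ⊤ → K = ⊤) {p : ℕ}
    [Fact p.Prime] (hp : p ∣ Nat.card G) : p ∣ N.index := by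
  by_contra hpN
  obtain ⟨P⟩ : Nonempty (Sylow p G) := inferInstance
  have hPN : (P : Subgroup G) ≤ N := by
    simpa using P.isPGroup'.le_ker_of_not_dvd_card (QuotientGroup.mk' N) hpN
  have : (P : Subgroup G).Normal :=
    normalizer_eq_top_iff.mp (hN _ (Sylow.normalizer_sup_eq_top' P hPN))
  obtain ⟨C, hC⟩ := exists_right_complement'_of_coprime P.card_coprime_index
  have hCN : C ⊔ N = ⊤ := top_le_iff.mp <|
    hC.sup_eq_top ▸ sup_le (le_sup_of_le_right hPN) le_sup_left
  exact P.ne_bot_of_dvd_card hp (isComplement'_top_right.mp (hN C hCN ▸ hC))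

theorem Subgroup.eq_top_of_sup_ker_eq_top_of_minimal {G H : Type*} [Group G] [Group H]
    {f : G →* H} {M : Subgroup G} (hM : Minimal (fun M : Subgroup G => M.map f = ⊤) M)
    {K : Subgroup M} (hK : K ⊔ (f.comp M.subtype).ker = ⊤) : K = ⊤ := by
  have hKf : (K.map M.subtype).map f = ⊤ := by
    rw [map_map, map_eq_range_iff.mpr (codisjoint_iff.mpr hK), MonoidHom.range_comp,
      range_subtype, hM.prop]
  have hMK : M ≤ K.map M.subtype := hM.le_of_le hKf (map_subtype_le K)
  rw [eq_top_iff, ← map_subtype_le_map_subtype, ← MonoidHom.range_eq_map, range_subtype]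
  exact hMK

theorem exists_pi_subgroup_mapping_onto_general
    (π : Set ℕ) (G H : Type*) [Group G] [Finite G]
    [Group H] (f : G →* H) (hf : Function.Surjective f)
    (hH : IsPiGroup π H) :
    ∃ M : Subgroup G, IsPiGroup π ↥M ∧ M.map f = ⊤ := by
  obtain ⟨M, hM⟩ := exists_minimal_of_wellFoundedLT (fun M : Subgroup G => M.map f = ⊤)
    ⟨⊤, by rw [← MonoidHom.range_eq_map, MonoidHom.range_eq_top.mpr hf]⟩
  refine ⟨M, fun p hp hpM => hH p hp ?_, hM.prop⟩
  have : Fact p.Prime := ⟨hp⟩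
  have hpK := Subgroup.prime_dvd_index_of_forall_sup_eq_top
    (fun K => Subgroup.eq_top_of_sup_ker_eq_top_of_minimal hM) hpM
  rwa [Subgroup.index_ker, MonoidHom.range_comp, Subgroup.range_subtype, hM.prop,
    Subgroup.card_top] at hpK

theorem exists_pi_subgroup_mapping_onto
    (π : Set ℕ) (hπ : ∀ p ∈ π, p.Prime) (G H : Type*) [Group G] [Finite G]
    [Group H] [Finite H] (f : G →* H) (hf : Function.Surjective f)
    (hH : IsPiGroup π H) :
    ∃ M : Subgroup G, IsPiGroup π ↥M ∧ M.map f = ⊤ :=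
  exists_pi_subgroup_mapping_onto_general π G H f hf hH
end

section
/- Let π be a set of primes, let G and H be finite groups with H a π-group, and let f : G → H be a surjective group homomorphism with kernel K. Let J be an intravariant π-subgroup of K. Then there exists a π-subgroup M of G with J ≤ M and f(M) = H. -/
/-!
Intravariance of `J` in `K = ker f` gives the Frattini factorisation `G = N_G(J) K`, so the
normalizer of `J` still maps onto `H`; replacing `G` by it and passing to the quotient by `J`
reduces the problem to `J = 1`. There, take `M` minimal with `f(M) = H`. If a prime `p ∉ π`
divided `|M ∩ K|`, a Sylow `p`-subgroup of `M ∩ K` would be normal in `M` (Frattini argument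
and minimality) and of order coprime to its index, so by Schur–Zassenhaus it would have a
complement, which still maps onto `H`: this contradicts minimality. Hence `M ∩ K`, and with it
`M`, is a `π`-group.
-/

open Subgroup

namespace IsPiGroup

variable {π : Set ℕ} {G G' : Type*} [Group G] [Group G']

theorem of_card_dvd (h : IsPiGroup π G') (hdvd : Nat.card G ∣ Nat.card G') : IsPiGroup π G :=
  fun p hp hpG => h p hp (hpG.trans hdvd)

theorem of_ker_of_range (f : G →* G') (hker : IsPiGroup π f.ker)
    (hrange : IsPiGroup π f.range) : IsPiGroup π G := by
  intro p hp hpG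
  rw [← f.ker.card_mul_index, index_ker] at hpG
  exact (hp.dvd_mul.mp hpG).elim (hker p hp) (hrange p hp)

end IsPiGroup

section Supplement

variable {π : Set ℕ} {G H : Type*} [Group G] [Group H]

theorem Subgroup.map_eq_top_of_sup_ker_eq_top {f : G →* H} (hf : Function.Surjective f)
    {L : Subgroup G} (hL : L ⊔ f.ker = ⊤) : L.map f = ⊤ := by
  rw [← map_top_of_surjective f hf, map_eq_map_iff, hL, top_sup_eq]

theorem MonoidHom.surjective_comp_subtype_of_map_eq_top {f : G →* H} {M : Subgroup G}
    (hM : M.map f = ⊤) : Function.Surjective (f.comp M.subtype) := by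
  rw [← MonoidHom.range_eq_top, MonoidHom.range_comp, range_subtype, hM]

theorem IsPiGroup.of_surjective_of_minimal [Finite G] {f : G →* H} (hf : Function.Surjective f)
    (hH : IsPiGroup π H) (hmin : ∀ L : Subgroup G, L.map f = ⊤ → L = ⊤) :
    IsPiGroup π G := by
  have hsupp : ∀ L : Subgroup G, L ⊔ f.ker = ⊤ → L = ⊤ := fun L hL =>
    hmin L (map_eq_top_of_sup_ker_eq_top hf hL)
  have hrange : f.range = ⊤ := f.range_eq_top.mpr hf
  refine IsPiGroup.of_ker_of_range f ?_ (hrange ▸ hH.of_card_dvd card_top.dvd)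
  intro p hp hpK
  by_contra hpπ
  have := Fact.mk hp
  obtain ⟨P⟩ : Nonempty (Sylow p f.ker) := inferInstance
  set Q := (P : Subgroup f.ker).map f.ker.subtype
  have hQ : Q.Normal := normalizer_eq_top_iff.mp (hsupp _ P.normalizer_sup_eq_top)
  have hcop : (Nat.card Q).Coprime Q.index := by
    rw [card_map_of_injective f.ker.subtype_injective, index_map_subtype, index_ker, hrange,
      card_top]
    obtain ⟨n, hn⟩ := IsPGroup.iff_card.mp P.2
    refine P.card_coprime_index.mul_right ?_
    rw [hn]
    exact Nat.Coprime.pow_left n ((Nat.Prime.coprime_iff_not_dvd hp).mpr fun h => hpπ (hH p hp h))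
  obtain ⟨C, hC⟩ := exists_right_complement'_of_coprime hcop
  have hCtop : C = ⊤ := hsupp C <| top_le_iff.mp <|
    hC.sup_eq_top ▸ sup_comm C _ ▸ sup_le_sup_left (map_subtype_le _) C
  rw [hCtop, isComplement'_top_right, map_eq_bot_iff_of_injective _ f.ker.subtype_injective] at hC
  exact P.ne_bot_of_dvd_card hpK hC

theorem exists_isPiGroup_map_eq_top [Finite G] {f : G →* H} (hf : Function.Surjective f)
    (hH : IsPiGroup π H) : ∃ M : Subgroup G, IsPiGroup π M ∧ M.map f = ⊤ := by
  obtain ⟨M, hM, hMmin⟩ := exists_minimal_of_wellFoundedLT (fun M : Subgroup G => M.map f = ⊤)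
    ⟨⊤, map_top_of_surjective f hf⟩
  refine ⟨M, IsPiGroup.of_surjective_of_minimal (f.surjective_comp_subtype_of_map_eq_top hM) hH
    fun L hL => ?_, hM⟩
  rw [← map_map] at hL
  rw [eq_top_iff, ← map_subtype_le_map_subtype, ← MonoidHom.range_eq_map, range_subtype]
  exact hMmin hL (map_subtype_le L)

theorem exists_isPiGroup_map_eq_top_of_le_ker [Finite G] {f : G →* H} (hf : Function.Surjective f)
    (hH : IsPiGroup π H) {J : Subgroup G} [J.Normal] (hJ : IsPiGroup π J) (hJf : J ≤ f.ker) :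
    ∃ M : Subgroup G, IsPiGroup π M ∧ J ≤ M ∧ M.map f = ⊤ := by
  obtain ⟨M, hMπ, hM⟩ := exists_isPiGroup_map_eq_top (f := QuotientGroup.lift J f hJf)
    (QuotientGroup.lift_surjective_of_surjective _ _ hf _) hH
  refine ⟨M.comap (QuotientGroup.mk' J), ?_, ?_, ?_⟩
  · refine IsPiGroup.of_ker_of_range ((QuotientGroup.mk' J).comp (M.comap _).subtype) ?_ ?_
    · rw [← MonoidHom.comap_ker, QuotientGroup.ker_mk']
      exact hJ.of_card_dvd (card_comap_dvd_of_injective _ _ (subtype_injective _))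
    · rwa [MonoidHom.range_comp, range_subtype,
        map_comap_eq_self_of_surjective (QuotientGroup.mk'_surjective J)]
  · exact (QuotientGroup.ker_mk' J).symm.le.trans (MonoidHom.ker_le_comap _ _)
  · rw [← QuotientGroup.lift_comp_mk' (N := J) f hJf, ← map_map,
      map_comap_eq_self_of_surjective (QuotientGroup.mk'_surjective J), hM]

end Supplement

theorem IsIntravariant.normalizer_map_subtype_sup_eq_top {G : Type*} [Group G] {K : Subgroup G}
    [K.Normal] {J : Subgroup K} (hJ : IsIntravariant J) :
    normalizer (J.map K.subtype : Set G) ⊔ K = ⊤ := by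
  refine top_le_iff.mp fun g _ => ?_
  obtain ⟨k, hk⟩ := hJ (MulAut.conjNormal g)
  have hconj : (J.map K.subtype).map (MulAut.conj g : G →* G) =
      (J.map K.subtype).map (MulAut.conj (k : G) : G →* G) := by
    convert congrArg (map K.subtype) hk using 1 <;> rw [map_map, map_map] <;> rfl
  rw [← mul_inv_cancel_left (k : G) g, sup_comm]
  refine mul_mem_sup k.2 (mem_normalizer_iff_map_conj_eq.mpr ?_)
  rw [map_mul, MulAut.mul_def, MulEquiv.coe_monoidHom_trans, ← map_map, hconj, map_map,
    ← MulEquiv.coe_monoidHom_trans, ← MulAut.mul_def, ← map_mul, inv_mul_cancel, map_one]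
  exact map_id _

theorem exists_pi_subgroup_mapping_onto_containing_intravariant_general
    (π : Set ℕ) (G H : Type*) [Group G] [Finite G]
    [Group H] (f : G →* H) (hf : Function.Surjective f)
    (hH : IsPiGroup π H)
    (J : Subgroup ↥f.ker) (hJint : IsIntravariant J) (hJpi : IsPiGroup π ↥J) :
    ∃ M : Subgroup G, IsPiGroup π ↥M ∧ J.map f.ker.subtype ≤ M ∧ M.map f = ⊤ := by
  set J' := J.map f.ker.subtype
  set N := normalizer (J' : Set G)
  have hN : N.map f = ⊤ := map_eq_top_of_sup_ker_eq_top hf hJint.normalizer_map_subtype_sup_eq_top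
  have hJ'π : IsPiGroup π (J'.subgroupOf N) := hJpi.of_card_dvd
    ((card_comap_dvd_of_injective _ _ N.subtype_injective).trans
      (card_map_of_injective f.ker.subtype_injective).dvd)
  obtain ⟨M, hMπ, hJ'M, hM⟩ := exists_isPiGroup_map_eq_top_of_le_ker
    (f.surjective_comp_subtype_of_map_eq_top hN) hH hJ'π (comap_mono (map_subtype_le J))
  refine ⟨M.map N.subtype, hMπ.of_card_dvd (card_map_of_injective N.subtype_injective).dvd,
    ?_, by rwa [map_map]⟩
  calc J' = (J'.subgroupOf N).map N.subtype := by
        rw [subgroupOf_map_subtype, inf_of_le_left le_normalizer]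
    _ ≤ M.map N.subtype := map_mono hJ'M

theorem exists_pi_subgroup_mapping_onto_containing_intravariant
    (π : Set ℕ) (hπ : ∀ p ∈ π, p.Prime) (G H : Type*) [Group G] [Finite G]
    [Group H] [Finite H] (f : G →* H) (hf : Function.Surjective f)
    (hH : IsPiGroup π H)
    (J : Subgroup ↥f.ker) (hJint : IsIntravariant J) (hJpi : IsPiGroup π ↥J) :
    ∃ M : Subgroup G, IsPiGroup π ↥M ∧ J.map f.ker.subtype ≤ M ∧ M.map f = ⊤ :=
  exists_pi_subgroup_mapping_onto_containing_intravariant_general π G H f hf hH J hJint hJpi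
end

section
/- Let G and H be finite groups with H solvable, and let f : G → H be a surjective group homomorphism with kernel K. Let J be an intravariant solvable subgroup of K. Then there exists a solvable subgroup M of G with J ≤ M and f(M) = H. -/
/-!
Intravariance yields a Frattini argument: conjugation by `g ∈ G` restricts to an automorphism of
`K = ker f`, which moves `J` to a `K`-conjugate of `J`; hence `G = K · N_G(J)` and `f` maps
`N_G(J)` onto `H`. Inside `N_G(J)` the subgroup `J` is normal, solvable and contained in the
kernel, so it suffices to find a solvable subgroup of `N_G(J)/J` mapping onto `H` and pull it
back. In a finite group, a minimal subgroup `M` mapping onto `H` has the kernel of `M → H` inside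
its Frattini subgroup, which is nilpotent; so `M` is solvable as an extension of a solvable
group by `H`.
-/

open Subgroup

theorem Order.le_radical_of_forall_sup_eq_top {α : Type*} [CompleteLattice α] {a : α}
    (h : ∀ b, b ⊔ a = ⊤ → b = ⊤) : a ≤ Order.radical α :=
  le_iInf₂ fun _ hc => by_contra fun hac => hc.1 (h _ (hc.2 _ (left_lt_sup.2 hac)))

section Solvable

variable {X H : Type*} [Group X] [Group H]

theorem Subgroup.isSolvable_map (φ : X →* H) (S : Subgroup X) [Group.IsSolvable S] :
    Group.IsSolvable (S.map φ) :=
  Group.isSolvable_of_surjective (φ.subgroupMap_surjective S)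

theorem Subgroup.isSolvable_comap (φ : X →* H) [Group.IsSolvable φ.ker] (S : Subgroup H)
    [Group.IsSolvable S] : Group.IsSolvable (S.comap φ) := by
  refine Group.isSolvable_of_ker_le_range (inclusion (φ.ker_le_comap S)) (φ.subgroupComap S)
    fun x hx => ⟨⟨x, congrArg Subtype.val hx⟩, rfl⟩

theorem MonoidHom.ker_le_frattini_of_forall_map_eq_top (φ : X →* H) (hφ : Function.Surjective φ)
    (h : ∀ C : Subgroup X, C.map φ = ⊤ → C = ⊤) : φ.ker ≤ frattini X := by
  refine Order.le_radical_of_forall_sup_eq_top fun C hC => h C ?_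
  rw [← map_comap_eq_self_of_surjective hφ (C.map φ), comap_map_eq, hC,
    map_top_of_surjective φ hφ]

theorem Group.isSolvable_of_ker_le_frattini [Finite X] [Group.IsSolvable H] (φ : X →* H)
    (h : φ.ker ≤ frattini X) : Group.IsSolvable X :=
  have : Group.IsNilpotent (frattini X) := frattini_nilpotent
  have : Group.IsSolvable φ.ker :=
    Group.isSolvable_of_isSolvable_injective (f := inclusion h) (inclusion_injective h)
  Group.isSolvable_of_ker_le_range φ.ker.subtype φ (range_subtype _).ge

theorem exists_isSolvable_map_eq_top [Finite X] [Group.IsSolvable H] (φ : X →* H)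
    (hφ : Function.Surjective φ) : ∃ M : Subgroup X, Group.IsSolvable M ∧ M.map φ = ⊤ := by
  obtain ⟨M, hM⟩ := exists_minimal_of_wellFoundedLT (fun M : Subgroup X => M.map φ = ⊤)
    ⟨⊤, map_top_of_surjective φ hφ⟩
  refine ⟨M, ?_, hM.prop⟩
  have hψ : Function.Surjective (φ.comp M.subtype) := by
    rw [← MonoidHom.range_eq_top, MonoidHom.range_comp, range_subtype]
    exact hM.prop
  refine Group.isSolvable_of_ker_le_frattini _
    ((φ.comp M.subtype).ker_le_frattini_of_forall_map_eq_top hψ fun C hC => ?_)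
  apply map_injective M.subtype_injective
  rw [← MonoidHom.range_eq_map, range_subtype]
  exact hM.eq_of_le (by rwa [map_map]) (map_subtype_le C)

theorem exists_isSolvable_le_map_eq_top_of_normal [Finite X] [Group.IsSolvable H] (φ : X →* H)
    (hφ : Function.Surjective φ) (L : Subgroup X) [L.Normal] [Group.IsSolvable L]
    (hL : L ≤ φ.ker) : ∃ M : Subgroup X, Group.IsSolvable M ∧ L ≤ M ∧ M.map φ = ⊤ := by
  set φ' := QuotientGroup.lift L φ hL
  have hφ' : φ'.comp (QuotientGroup.mk' L) = φ := QuotientGroup.lift_comp_mk' L φ hL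
  obtain ⟨S, hS, hSφ'⟩ :=
    exists_isSolvable_map_eq_top φ' (QuotientGroup.lift_surjective_of_surjective L φ hφ hL)
  have : Group.IsSolvable (QuotientGroup.mk' L).ker := by rwa [QuotientGroup.ker_mk']
  refine ⟨S.comap (QuotientGroup.mk' L), S.isSolvable_comap _, ?_, ?_⟩
  · simpa only [QuotientGroup.ker_mk'] using (QuotientGroup.mk' L).ker_le_comap S
  · rw [← hφ', ← map_map, map_comap_eq_self_of_surjective (QuotientGroup.mk'_surjective L),
      hSφ']

theorem exists_isSolvable_le_map_eq_top [Finite X] [Group.IsSolvable H] (φ : X →* H)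
    (L : Subgroup X) [Group.IsSolvable L] (hL : L ≤ φ.ker)
    (hN : (normalizer (L : Set X)).map φ = ⊤) :
    ∃ M : Subgroup X, Group.IsSolvable M ∧ L ≤ M ∧ M.map φ = ⊤ := by
  set N := normalizer (L : Set X)
  have hψ : Function.Surjective (φ.comp N.subtype) := by
    rw [← MonoidHom.range_eq_top, MonoidHom.range_comp, range_subtype]
    exact hN
  have : Group.IsSolvable (L.subgroupOf N) :=
    Group.isSolvable_of_isSolvable_injective
      (f := (subgroupOfEquivOfLe le_normalizer).toMonoidHom) (MulEquiv.injective _)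
  obtain ⟨M, hM, hLM, hMφ⟩ := exists_isSolvable_le_map_eq_top_of_normal _ hψ (L.subgroupOf N)
    fun x hx => hL hx
  refine ⟨M.map N.subtype, M.isSolvable_map _, ?_, by rwa [map_map]⟩
  calc L = (L.subgroupOf N).map N.subtype := by
        rw [subgroupOf_map_subtype, inf_of_le_left le_normalizer]
    _ ≤ M.map N.subtype := map_mono hLM

end Solvable

theorem Subgroup.map_map_subtype_conj {G : Type*} [Group G] {K : Subgroup G} [K.Normal]
    (J : Subgroup K) (g : G) :
    (J.map K.subtype).map (MulAut.conj g).toMonoidHom =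
      (J.map (MulAut.conjNormal g).toMonoidHom).map K.subtype := by
  rw [map_map, map_map]
  rfl

theorem IsIntravariant.exists_mul_mem_normalizer {G : Type*} [Group G] {K : Subgroup G}
    [K.Normal] {J : Subgroup K} (hJ : IsIntravariant J) (g : G) :
    ∃ k ∈ K, k * g ∈ normalizer (J.map K.subtype : Set G) := by
  obtain ⟨k, hk⟩ := hJ (MulAut.conjNormal g)
  have hconj : ∀ x : G,
      g⁻¹ * x * g ∈ J.map K.subtype ↔ (k : G)⁻¹ * x * k ∈ J.map K.subtype := by
    have := congrArg (map K.subtype) hk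
    rw [← map_map_subtype_conj, ← MulAut.conjNormal_val, ← map_map_subtype_conj,
      SetLike.ext_iff] at this
    simpa only [mem_map_equiv, MulAut.conj_symm_apply] using this
  refine ⟨(k : G)⁻¹, inv_mem k.2, mem_normalizer_iff''.2 fun x => ?_⟩
  rw [show ((k : G)⁻¹ * g)⁻¹ * x * ((k : G)⁻¹ * g) = g⁻¹ * (k * x * (k : G)⁻¹) * g by group,
    hconj, show (k : G)⁻¹ * (k * x * (k : G)⁻¹) * k = x by group]

theorem exists_solvable_subgroup_mapping_onto_containing_intravariant_general
    (G H : Type*) [Group G] [Finite G] [Group H]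
    (f : G →* H) (hf : Function.Surjective f) (hH : IsSolvable H)
    (J : Subgroup ↥f.ker) (hJint : IsIntravariant J) (hJsolv : IsSolvable ↥J) :
    ∃ M : Subgroup G, IsSolvable ↥M ∧ J.map f.ker.subtype ≤ M ∧ M.map f = ⊤ := by
  have hN : (normalizer (J.map f.ker.subtype : Set G)).map f = ⊤ := by
    refine eq_top_iff.2 fun h _ => ?_
    obtain ⟨g, rfl⟩ := hf h
    obtain ⟨k, hk, hkg⟩ := hJint.exists_mul_mem_normalizer g
    exact ⟨k * g, hkg, by rw [map_mul, hk, one_mul]⟩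
  have : Group.IsSolvable H := hH
  have : Group.IsSolvable J := hJsolv
  have : Group.IsSolvable (J.map f.ker.subtype) := J.isSolvable_map _
  exact exists_isSolvable_le_map_eq_top f _ (map_subtype_le J) hN

theorem exists_solvable_subgroup_mapping_onto_containing_intravariant
    (G H : Type*) [Group G] [Finite G] [Group H] [Finite H]
    (f : G →* H) (hf : Function.Surjective f) (hH : IsSolvable H)
    (J : Subgroup ↥f.ker) (hJint : IsIntravariant J) (hJsolv : IsSolvable ↥J) :
    ∃ M : Subgroup G, IsSolvable ↥M ∧ J.map f.ker.subtype ≤ M ∧ M.map f = ⊤ :=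
  exists_solvable_subgroup_mapping_onto_containing_intravariant_general G H f hf hH J hJint hJsolv
end

section
/- Let n ≥ 5 be odd and let R be a Sylow 2-subgroup of the alternating group Alt_n acting naturally on a set of size n. Then the orbits of R have pairwise distinct cardinalities, each orbit has cardinality a power of 2, and the number of orbits of R is at most log₂(n) + 1. -/
/-!
Let `R` act on `Fin n` with orbits of sizes `m_ω`. The permutations preserving every orbit form
`∏ Sym(m_ω)`; its even part contains `R` and has index `2` (there is a transposition in it),
so `2 * |R|` divides `∏ m_ω!`. If two orbits had the same size `m`, merging them (`m! * m!`
divides `(2m)!` with an even quotient) would give `2 * ∏ m_ω! ∣ n! = 2 * |Alt_n|`, so `2 * |R|`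
would divide `|Alt_n|`, contradicting that `R` is a Sylow `2`-subgroup. Orbit sizes are powers
of `2` since `R` is a `2`-group, and distinct powers of `2` that are at most `n` number at most
`log₂ n + 1`.
-/

open Equiv MulAction Nat

namespace Nat

theorem two_mul_factorial_mul_factorial_dvd_factorial_two_mul {a : ℕ} (ha : 0 < a) :
    2 * (a ! * a !) ∣ (2 * a)! := by
  obtain ⟨c, hc⟩ := two_dvd_centralBinom_of_one_le ha
  refine ⟨c, ?_⟩
  rw [← choose_mul_factorial_mul_factorial (show a ≤ 2 * a by omega),
    show 2 * a - a = a by omega, ← centralBinom_eq_two_mul_choose, hc]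
  ring

theorem two_mul_prod_factorial_dvd_factorial_sum_of_eq {ι : Type*} [DecidableEq ι]
    {s : Finset ι} (m : ι → ℕ) {i j : ι} (hi : i ∈ s) (hj : j ∈ s) (hij : i ≠ j)
    (hm : m i = m j) (hpos : 0 < m i) :
    2 * ∏ k ∈ s, (m k)! ∣ (∑ k ∈ s, m k)! := by
  have hj' : j ∈ s.erase i := Finset.mem_erase.mpr ⟨hij.symm, hj⟩
  rw [← Finset.mul_prod_erase s _ hi, ← Finset.mul_prod_erase _ _ hj',
    ← Finset.add_sum_erase s _ hi, ← Finset.add_sum_erase _ _ hj', ← hm, ← add_assoc, ← two_mul,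
    ← mul_assoc (m i)!, ← mul_assoc]
  exact (mul_dvd_mul (two_mul_factorial_mul_factorial_dvd_factorial_two_mul hpos)
    (prod_factorial_dvd_factorial_sum _ _)).trans (factorial_mul_factorial_dvd_factorial_add _ _)

theorem card_le_log_add_one_of_injective {ι : Type*} [Finite ι] {b n : ℕ} (hb : 1 < b)
    {m : ι → ℕ} (hinj : Function.Injective m) (hpow : ∀ i, ∃ k, m i = b ^ k)
    (hle : ∀ i, m i ≤ n) : Nat.card ι ≤ log b n + 1 := by
  choose k hk using hpow
  have hkle (i : ι) : k i < log b n + 1 := lt_succ_of_le <| le_log_of_pow_le hb (hk i ▸ hle i)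
  have hkinj : Function.Injective fun i => (⟨k i, hkle i⟩ : Fin (log b n + 1)) := by
    intro i j hij
    apply hinj
    rw [hk i, hk j, show k i = k j from congrArg Fin.val hij]
  simpa using Nat.card_le_card_of_injective _ hkinj

end Nat

section FiberPreserving

variable {α ι : Type*}

def fiberPreservingPerms (f : α → ι) : Subgroup (Perm α) where
  carrier := {g | f ∘ g = f}
  one_mem' := rfl
  mul_mem' {g h} hg hh := by
    change f ∘ g ∘ h = f
    rw [← Function.comp_assoc, hg, hh]
  inv_mem' {g} hg := by
    change f ∘ g.symm = f
    conv_lhs => rw [← hg]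
    ext a
    simp

theorem card_fiberPreservingPerms [Finite α] [Fintype ι] (f : α → ι) :
    Nat.card (fiberPreservingPerms f) = ∏ i, (Nat.card {a // f a = i})! := by
  classical
  have := Fintype.ofFinite α
  have h := DomMulAct.stabilizer_card f
  simp only [← Nat.card_eq_fintype_card] at h
  exact h

theorem swap_mem_fiberPreservingPerms [DecidableEq α] {f : α → ι} {x y : α} (h : f x = f y) :
    swap x y ∈ fiberPreservingPerms f := by
  funext a
  simp only [Function.comp_apply]
  rcases eq_or_ne a x with rfl | hx
  · rw [swap_apply_left, h]
  rcases eq_or_ne a y with rfl | hy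
  · rw [swap_apply_right, h]
  · rw [swap_apply_of_ne_of_ne hx hy]

end FiberPreserving

theorem two_mul_card_dvd_card_of_swap_mem {α : Type*} [Fintype α] [DecidableEq α]
    {H K : Subgroup (Perm α)} (hK : K ≤ H ⊓ alternatingGroup α) {x y : α} (hxy : x ≠ y)
    (hswap : swap x y ∈ H) : 2 * Nat.card K ∣ Nat.card H := by
  have hsign : H.map Perm.sign = ⊤ := by
    refine eq_top_iff.mpr fun u _ => ?_
    rcases Int.units_eq_one_or u with rfl | rfl
    · exact one_mem _
    · exact ⟨swap x y, hswap, Perm.sign_swap hxy⟩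
  have hindex : (alternatingGroup α).relIndex H = 2 := by
    rw [alternatingGroup, Subgroup.relIndex_ker, hsign, Subgroup.card_top,
      Nat.card_eq_fintype_card, Fintype.card_units_int]
  have hcard : Nat.card ↥(H ⊓ alternatingGroup α) * 2 = Nat.card H := by
    rw [← hindex, ← Subgroup.relIndex_bot_left, ← Subgroup.relIndex_bot_left,
      inf_comm, Subgroup.relIndex_inf_mul_relIndex, bot_inf_eq]
  rw [← hcard, mul_comm _ 2]
  exact mul_dvd_mul_left 2 (Subgroup.card_dvd_of_le hK)

namespace MulAction

variable {G α : Type*} [Group G] [MulAction G α]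

theorem sum_card_orbit [Finite α] [Fintype (orbitRel.Quotient G α)] :
    ∑ ω : orbitRel.Quotient G α, Nat.card ω.orbit = Nat.card α := by
  rw [Nat.card_congr (selfEquivSigmaOrbits' G α), Nat.card_sigma]

theorem two_mul_card_dvd_prod_factorial_card_orbit [Fintype α] [DecidableEq α]
    [Fintype (orbitRel.Quotient G α)] [FaithfulSMul G α] [Nontrivial G]
    (hsign : ∀ g : G, Perm.sign (toPerm g : Perm α) = 1) :
    2 * Nat.card G ∣ ∏ ω : orbitRel.Quotient G α, (Nat.card ω.orbit)! := by
  obtain ⟨g, hg⟩ := exists_ne (1 : G)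
  obtain ⟨x, hx⟩ : ∃ x : α, g • x ≠ x := by
    by_contra! h
    exact hg (eq_of_smul_eq_smul fun a => by rw [h, one_smul])
  have hK : (toPermHom G α).range ≤
      fiberPreservingPerms (Quotient.mk _ : α → orbitRel.Quotient G α) ⊓ alternatingGroup α := by
    rintro _ ⟨h, rfl⟩
    exact ⟨funext fun a => orbitRel.Quotient.quotient_smul_eq, hsign h⟩
  have hdvd := two_mul_card_dvd_card_of_swap_mem hK hx.symm
    (swap_mem_fiberPreservingPerms orbitRel.Quotient.quotient_smul_eq.symm)
  rw [← Nat.card_congr (MonoidHom.ofInjective (toPerm_injective (α := G) (β := α))).toEquiv,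
    card_fiberPreservingPerms] at hdvd
  convert hdvd using 3 with ω
  exact Nat.card_congr (subtypeEquivRight fun _ => orbitRel.Quotient.mem_orbit)

end MulAction

theorem Sylow.injective_card_orbit_alternatingGroup {α : Type*} [Fintype α] [DecidableEq α]
    (hα : 4 ≤ Fintype.card α) (P : Sylow 2 (alternatingGroup α)) :
    Function.Injective fun ω : orbitRel.Quotient P α => Nat.card ω.orbit := by
  classical
  have := Fintype.ofFinite (orbitRel.Quotient P α)
  have : Nontrivial α := Fintype.one_lt_card_iff_nontrivial.mp (by omega)
  have hA : 2 * Nat.card (alternatingGroup α) = (Fintype.card α)! := by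
    rw [two_mul_nat_card_alternatingGroup, Nat.card_perm, Nat.card_eq_fintype_card]
  have : Nontrivial P := by
    refine (Subgroup.nontrivial_iff_ne_bot _).mpr (P.ne_bot_of_dvd_card ?_)
    refine Nat.dvd_of_mul_dvd_mul_left two_pos ?_
    rw [hA]
    exact Nat.dvd_factorial (by norm_num) hα
  have hP := two_mul_card_dvd_prod_factorial_card_orbit (G := P) (α := α) fun g => g.1.2
  intro ω ω' h
  by_contra hne
  have hpos : 0 < Nat.card ω.orbit := by
    induction ω using Quotient.inductionOn with | h x =>
    exact Nat.card_pos_iff.mpr ⟨⟨⟨x, mem_orbit_self x⟩⟩, inferInstance⟩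
  have hmerge := two_mul_prod_factorial_dvd_factorial_sum_of_eq (fun ω => Nat.card ω.orbit)
    (Finset.mem_univ ω) (Finset.mem_univ ω') hne h hpos
  rw [sum_card_orbit, Nat.card_eq_fintype_card, ← hA, ← P.card_mul_index] at hmerge
  have h2P := Nat.dvd_of_mul_dvd_mul_left two_pos ((mul_dvd_mul_left 2 hP).trans hmerge)
  rw [mul_comm] at h2P
  exact P.not_dvd_index (Nat.dvd_of_mul_dvd_mul_left Nat.card_pos h2P)

theorem sylow_two_orbits_of_alternating_odd_degree_general
    (n : ℕ) (hn : 5 ≤ n)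
    (R : Sylow 2 ↥(alternatingGroup (Fin n))) :
    (∀ x y : Fin n,
        Nat.card (MulAction.orbit ↥(R : Subgroup ↥(alternatingGroup (Fin n))) x) =
          Nat.card (MulAction.orbit ↥(R : Subgroup ↥(alternatingGroup (Fin n))) y) →
        MulAction.orbit ↥(R : Subgroup ↥(alternatingGroup (Fin n))) x =
          MulAction.orbit ↥(R : Subgroup ↥(alternatingGroup (Fin n))) y) ∧
    (∀ x : Fin n, ∃ k : ℕ,
        Nat.card (MulAction.orbit ↥(R : Subgroup ↥(alternatingGroup (Fin n))) x) = 2 ^ k) ∧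
    Nat.card
        (MulAction.orbitRel.Quotient ↥(R : Subgroup ↥(alternatingGroup (Fin n))) (Fin n)) ≤
      Nat.log 2 n + 1 := by
  have hinj := R.injective_card_orbit_alternatingGroup (by rw [Fintype.card_fin]; omega)
  have hpow (x : Fin n) : ∃ k, Nat.card (orbit R x) = 2 ^ k := R.isPGroup'.card_orbit x
  refine ⟨fun x y hxy => orbit_eq_iff.mpr (Quotient.eq''.mp (hinj hxy)), hpow, ?_⟩
  refine card_le_log_add_one_of_injective one_lt_two hinj (Quotient.ind hpow) fun ω => ?_
  simpa using Nat.card_le_card_of_injective _ (Subtype.val_injective (p := (· ∈ ω.orbit)))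

theorem sylow_two_orbits_of_alternating_odd_degree
    (n : ℕ) (hn : 5 ≤ n) (hodd : Odd n)
    (R : Sylow 2 ↥(alternatingGroup (Fin n))) :
    (∀ x y : Fin n,
        Nat.card (MulAction.orbit ↥(R : Subgroup ↥(alternatingGroup (Fin n))) x) =
          Nat.card (MulAction.orbit ↥(R : Subgroup ↥(alternatingGroup (Fin n))) y) →
        MulAction.orbit ↥(R : Subgroup ↥(alternatingGroup (Fin n))) x =
          MulAction.orbit ↥(R : Subgroup ↥(alternatingGroup (Fin n))) y) ∧
    (∀ x : Fin n, ∃ k : ℕ,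
        Nat.card (MulAction.orbit ↥(R : Subgroup ↥(alternatingGroup (Fin n))) x) = 2 ^ k) ∧
    Nat.card
        (MulAction.orbitRel.Quotient ↥(R : Subgroup ↥(alternatingGroup (Fin n))) (Fin n)) ≤
      Nat.log 2 n + 1 :=
  sylow_two_orbits_of_alternating_odd_degree_general n hn R
end
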